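/- arXiv:2007.08057 — 8 statements merged into one kernel-verified Lean document; each statement's English description precedes it below -/
import Mathlib

section
/- Let H = W_k be the wheel on k ≥ 5 vertices with center v_0, i.e., a cycle on k−1 vertices plus a vertex v_0 adjacent to all cycle vertices. Define c(v_0) = k−5 and c(v) = 1 for every other vertex v. Then c is not identically zero and the total cost c(V(H)) = 2(k−3) is at most twice the minimum cost of a hitting set of H, i.e., every hitting set X of H satisfies c(X) ≥ k−3. -/
variable {V : Type*}

/-- The triple (u,v,w) induces a path on 3 vertices (u - v - w) in G. -/
def IsInducedP3 (G : SimpleGraph V) (u v w : V) : Prop :=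
  u ≠ w ∧ G.Adj u v ∧ G.Adj v w ∧ ¬ G.Adj u w

/-- A cluster graph: every connected component is a complete graph. -/
def IsClusterGraph (G : SimpleGraph V) : Prop :=
  ∀ u v : V, u ≠ v → G.Reachable u v → G.Adj u v

/-- X is a hitting set of G: deleting X leaves a cluster graph. -/
def IsHittingSet (G : SimpleGraph V) (X : Set V) : Prop :=
  IsClusterGraph (G.induce Xᶜ)

/-- Minimum cost of a hitting set. -/
noncomputable def OPT (G : SimpleGraph V) (c : V → ℕ) : ℕ :=
  sInf {n | ∃ X : Finset V, IsHittingSet G ↑X ∧ ∑ v ∈ X, c v = n}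

/-- Maximum weight of a clique. -/
noncomputable def omegaW (G : SimpleGraph V) (c : V → ℕ) : ℕ :=
  sSup {n | ∃ K : Finset V, G.IsClique (↑K : Set V) ∧ ∑ v ∈ K, c v = n}

/-- u and u' are true twins within the induced subgraph on A. -/
def TrueTwinsIn (G : SimpleGraph V) (A : Set V) (u u' : V) : Prop :=
  u ∈ A ∧ u' ∈ A ∧ G.Adj u u' ∧
    ∀ w ∈ A, w ≠ u → w ≠ u' → (G.Adj u w ↔ G.Adj u' w)

/-! The rim `H − v₀` is a connected 2-regular graph on `k − 1 ≥ 4` vertices, so it has no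
triangle. A hitting set `X` avoiding `v₀` leaves only pairwise adjacent rim vertices (two
non-adjacent ones form an induced `P₃` through `v₀`), hence at most two, and `c(X) = |X| ≥ k − 3`.
For every rim vertex `s` the rim has an induced `P₃` avoiding `s` (centred at a vertex not
adjacent to `s`), so every hitting set contains two rim vertices; if it contains `v₀` as well,
`c(X) ≥ (k − 5) + 2`. -/

namespace SimpleGraph

variable {W : Type*} {G : SimpleGraph W}

lemma Reachable.mem_of_adj_closed {s : Set W} (hs : ∀ x y, G.Adj x y → x ∈ s → y ∈ s)
    {u v : W} (h : G.Reachable u v) (hu : u ∈ s) : v ∈ s := by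
  rw [reachable_iff_reflTransGen] at h
  induction h with
  | refl => exact hu
  | tail _ hyz ih => exact hs _ _ hyz ih

lemma neighborSet_eq_pair {v a b : W} (hdeg : (G.neighborSet v).ncard = 2) (hab : a ≠ b)
    (ha : G.Adj v a) (hb : G.Adj v b) : G.neighborSet v = {a, b} := by
  refine (Set.eq_of_subset_of_ncard_le (t := G.neighborSet v) (Set.pair_subset ha hb)
    ?_ ?_).symm
  · rw [hdeg, Set.ncard_pair hab]
  · exact Set.finite_of_ncard_pos (by omega)

/-- A triangle in a connected 2-regular graph is closed under adjacency, hence is everything. -/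
lemma Connected.cliqueFree_three [Finite W] (hG : G.Connected)
    (hdeg : ∀ v, (G.neighborSet v).ncard = 2) (hcard : 4 ≤ Nat.card W) : G.CliqueFree 3 := by
  classical
  intro t ht
  obtain ⟨a, b, c, hab, hac, hbc, -⟩ := is3Clique_iff.mp ht
  have hclosed : ∀ x y, G.Adj x y → x ∈ ({a, b, c} : Set W) → y ∈ ({a, b, c} : Set W) := by
    rintro x y hxy (rfl | rfl | rfl)
    · rw [← mem_neighborSet, neighborSet_eq_pair (hdeg x) hbc.ne hab hac] at hxy
      grind
    · rw [← mem_neighborSet, neighborSet_eq_pair (hdeg x) hac.ne hab.symm hbc] at hxy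
      grind
    · rw [← mem_neighborSet, neighborSet_eq_pair (hdeg x) hab.ne hac.symm hbc.symm] at hxy
      grind
  have huniv : (Set.univ : Set W) ⊆ {a, b, c} := fun v _ =>
    (hG.preconnected a v).mem_of_adj_closed hclosed (Set.mem_insert a _)
  have := Set.ncard_le_ncard huniv
  rw [Set.ncard_univ] at this
  have := Set.ncard_insert_le a {b, c}
  rw [Set.ncard_pair hbc.ne] at this
  omega

lemma exists_ne_not_adj [Finite W] (v : W) (hcard : (G.neighborSet v).ncard + 1 < Nat.card W) :
    ∃ w, w ≠ v ∧ ¬G.Adj v w := by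
  by_contra! h
  have huniv : (Set.univ : Set W) ⊆ insert v (G.neighborSet v) := fun w _ => by
    by_cases hw : w = v
    · exact Or.inl hw
    · exact Or.inr (h w hw)
  have := Set.ncard_le_ncard huniv
  rw [Set.ncard_univ] at this
  have := Set.ncard_insert_le v (G.neighborSet v)
  omega

lemma exists_isInducedP3_avoiding [Finite W] (hdeg : ∀ v, (G.neighborSet v).ncard = 2)
    (hG : G.CliqueFree 3) (hcard : 4 ≤ Nat.card W) (s : W) :
    ∃ a v b, a ≠ s ∧ v ≠ s ∧ b ≠ s ∧ IsInducedP3 G a v b := by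
  classical
  obtain ⟨v, hvs, hsv⟩ := exists_ne_not_adj s (by rw [hdeg]; omega)
  obtain ⟨a, b, hab, hN⟩ := Set.ncard_eq_two.mp (hdeg v)
  have hva : G.Adj v a := by simp [← mem_neighborSet, hN]
  have hvb : G.Adj v b := by simp [← mem_neighborSet, hN]
  refine ⟨a, v, b, ?_, hvs, ?_, hab, hva.symm, hvb, fun hab' => hG {v, a, b} ?_⟩
  · rintro rfl; exact hsv hva.symm
  · rintro rfl; exact hsv hvb.symm
  · exact is3Clique_triple_iff.mpr ⟨hva, hvb, hab'⟩

lemma ncard_neighborSet_induce (H : SimpleGraph W) (s : Set W) (v : s) :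
    ((H.induce s).neighborSet v).ncard = Nat.card {w : W // w ∈ s ∧ H.Adj v w} := by
  rw [← Nat.card_coe_set_eq]
  exact Nat.card_congr (Equiv.subtypeSubtypeEquivSubtypeInter _ _)

end SimpleGraph

lemma IsInducedP3.of_induce {H : SimpleGraph V} {s : Set V} {a v b : s}
    (h : IsInducedP3 (H.induce s) a v b) : IsInducedP3 H a v b :=
  ⟨fun hab => h.1 (Subtype.ext hab), h.2.1, h.2.2.1, h.2.2.2⟩

lemma IsHittingSet.exists_mem_of_isInducedP3 {G : SimpleGraph V} {X : Set V}
    (hX : IsHittingSet G X) {u m w : V} (h : IsInducedP3 G u m w) : u ∈ X ∨ m ∈ X ∨ w ∈ X := by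
  by_contra! hout
  obtain ⟨hu, hm, hw⟩ := hout
  obtain ⟨huw, hum, hmw, hnuw⟩ := h
  refine hnuw (hX ⟨u, hu⟩ ⟨w, hw⟩ (fun h => huw (congrArg Subtype.val h)) ?_)
  exact (show (G.induce Xᶜ).Adj ⟨u, hu⟩ ⟨m, hm⟩ from hum).reachable.trans
    (show (G.induce Xᶜ).Adj ⟨m, hm⟩ ⟨w, hw⟩ from hmw).reachable

lemma IsHittingSet.adj_of_universal {H : SimpleGraph V} {v0 : V} {X : Set V}
    (hX : IsHittingSet H X) (huniv : ∀ v, v ≠ v0 → H.Adj v0 v) (hv0 : v0 ∉ X)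
    {u w : V} (hu0 : u ≠ v0) (hw0 : w ≠ v0) (hu : u ∉ X) (hw : w ∉ X) (huw : u ≠ w) :
    H.Adj u w := by
  by_contra hnuw
  have hP : IsInducedP3 H u v0 w := ⟨huw, (huniv u hu0).symm, huniv w hw0, hnuw⟩
  rcases hX.exists_mem_of_isInducedP3 hP with h | h | h <;> contradiction

lemma IsHittingSet.card_compl_erase_le_two [Fintype V] [DecidableEq V] {H : SimpleGraph V}
    {v0 : V} (huniv : ∀ v, v ≠ v0 → H.Adj v0 v)
    (hrim : (H.induce ({v0}ᶜ : Set V)).CliqueFree 3) {X : Finset V}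
    (hX : IsHittingSet H X) (hv0 : v0 ∉ X) : (Xᶜ.erase v0).card ≤ 2 := by
  by_contra! h
  obtain ⟨a, b, c, ha, hb, hc, hab, hac, hbc⟩ := Finset.two_lt_card_iff.mp h
  simp only [Finset.mem_erase, Finset.mem_compl] at ha hb hc
  have hadj := fun {u w : V} (hu : u ≠ v0 ∧ u ∉ X) (hw : w ≠ v0 ∧ w ∉ X) (huw : u ≠ w) =>
    hX.adj_of_universal huniv hv0 hu.1 hw.1 (Finset.mem_coe.not.mpr hu.2)
      (Finset.mem_coe.not.mpr hw.2) huw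
  refine hrim {⟨a, ha.1⟩, ⟨b, hb.1⟩, ⟨c, hc.1⟩} (SimpleGraph.is3Clique_triple_iff.mpr ?_)
  exact ⟨hadj ha hb hab, hadj ha hc hac, hadj hb hc hbc⟩

lemma IsHittingSet.two_le_card_erase [Finite V] [DecidableEq V] {H : SimpleGraph V} {v0 : V}
    (hdeg : ∀ v, ((H.induce ({v0}ᶜ : Set V)).neighborSet v).ncard = 2)
    (hrim : (H.induce ({v0}ᶜ : Set V)).CliqueFree 3) (hcard : 4 ≤ Nat.card ({v0}ᶜ : Set V))
    {X : Finset V} (hX : IsHittingSet H X) : 2 ≤ (X.erase v0).card := by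
  have key : ∀ s : ({v0}ᶜ : Set V), ∃ x ∈ X.erase v0, x ≠ s := by
    intro s
    obtain ⟨a, v, b, has, hvs, hbs, hP⟩ :=
      SimpleGraph.exists_isInducedP3_avoiding hdeg hrim hcard s
    rcases hX.exists_mem_of_isInducedP3 (IsInducedP3.of_induce hP) with h | h | h
    · exact ⟨a, Finset.mem_erase.mpr ⟨a.2, h⟩, fun h' => has (Subtype.ext h')⟩
    · exact ⟨v, Finset.mem_erase.mpr ⟨v.2, h⟩, fun h' => hvs (Subtype.ext h')⟩
    · exact ⟨b, Finset.mem_erase.mpr ⟨b.2, h⟩, fun h' => hbs (Subtype.ext h')⟩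
  obtain ⟨s⟩ : Nonempty ({v0}ᶜ : Set V) := Nat.card_pos_iff.mp (by omega) |>.1
  obtain ⟨x, hx, -⟩ := key s
  obtain ⟨y, hy, hyx⟩ := key ⟨x, Finset.ne_of_mem_erase hx⟩
  exact Finset.one_lt_card.mpr ⟨y, hy, x, hx, hyx⟩

/-- Wheels on k ≥ 5 vertices are strongly 2-good. Here H is a wheel:
v₀ is universal and H − v₀ is a connected 2-regular graph (a cycle) on k−1 ≥ 4 vertices. -/
theorem stmt_2 [Fintype V] (H : SimpleGraph V) (v0 : V) (k : ℕ) (hk : 5 ≤ k)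
    (hcard : Fintype.card V = k)
    (huniv : ∀ v, v ≠ v0 → H.Adj v0 v)
    (hconn : (H.induce ({v0}ᶜ : Set V)).Connected)
    (hreg : ∀ v : V, v ≠ v0 → Nat.card {w : V // w ≠ v0 ∧ H.Adj v w} = 2)
    (c : V → ℕ) (hc0 : c v0 = k - 5) (hc1 : ∀ v, v ≠ v0 → c v = 1) :
    (∃ v, c v ≠ 0) ∧ (∑ v, c v = 2 * (k - 3)) ∧
      ∀ X : Finset V, IsHittingSet H ↑X → k - 3 ≤ ∑ v ∈ X, c v := by
  classical
  have hrimcard : Nat.card ({v0}ᶜ : Set V) = k - 1 := by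
    rw [Nat.card_coe_set_eq, Set.ncard_compl, Set.ncard_singleton, Nat.card_eq_fintype_card,
      hcard]
  have hdeg : ∀ v, ((H.induce ({v0}ᶜ : Set V)).neighborSet v).ncard = 2 := fun v => by
    rw [SimpleGraph.ncard_neighborSet_induce]
    exact hreg v v.2
  have hrim := hconn.cliqueFree_three hdeg (by omega)
  have hcost : ∀ S : Finset V, ∑ v ∈ S.erase v0, c v = (S.erase v0).card := fun S => by
    rw [Finset.card_eq_sum_ones]
    exact Finset.sum_congr rfl fun v hv => hc1 v (Finset.ne_of_mem_erase hv)
  obtain ⟨z, hz⟩ := Fintype.exists_ne_of_one_lt_card (by omega) v0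
  refine ⟨⟨z, by simp [hc1 z hz]⟩, ?_, fun X hX => ?_⟩
  · rw [← Finset.add_sum_erase _ c (Finset.mem_univ v0), hcost,
      Finset.card_erase_of_mem (Finset.mem_univ _), Finset.card_univ, hc0]
    omega
  by_cases hv0 : v0 ∈ X
  · have := hX.two_le_card_erase hdeg hrim (by omega)
    rw [← Finset.add_sum_erase _ c hv0, hcost, hc0]
    omega
  · have h2 := hX.card_compl_erase_le_two huniv hrim hv0
    rw [Finset.card_erase_of_mem (Finset.mem_compl.mpr hv0), Finset.card_compl] at h2
    rw [← Finset.erase_eq_of_notMem hv0, hcost, Finset.erase_eq_of_notMem hv0]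
    omega
end

section
/- Every chordal graph with no induced 2P_3 contains a hitting set that is a clique, i.e., there exists a clique K such that deleting K leaves a cluster graph. -/
variable {V : Type*}

/-- G has an induced cycle on n vertices. -/
def HasInducedCycle (G : SimpleGraph V) (n : ℕ) : Prop :=
  ∃ f : ZMod n → V, Function.Injective f ∧
    ∀ i j : ZMod n, G.Adj (f i) (f j) ↔ (j = i + 1 ∨ i = j + 1)

/-- A graph is chordal if it has no induced cycle of length at least 4. -/
def IsChordal (G : SimpleGraph V) : Prop :=
  ∀ n : ℕ, 4 ≤ n → ¬ HasInducedCycle G n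

/-- G contains two disjoint, anticomplete induced copies of P₃. -/
def HasInduced2P3 (G : SimpleGraph V) : Prop :=
  ∃ a b c d e f : V, IsInducedP3 G a b c ∧ IsInducedP3 G d e f ∧
    ∀ x ∈ ({a, b, c} : Set V), ∀ y ∈ ({d, e, f} : Set V), x ≠ y ∧ ¬ G.Adj x y

/-! Among all cliques `K` choose one minimising the number of vertices that lie in components
of `G - K` containing an induced `P₃`. If such a component `C` remains, its neighbourhood `S ⊆ K`
is a clique, and chordality gives a vertex `u ∈ C` complete to `S`: a shortest path in `C` towards
a neighbour of an undominated `s ∈ S`, closed up through `s`, would be a long induced cycle. For the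
clique `S ∪ {u}` every `P₃`-component lies in `C - u`, since one outside `C` would be anticomplete
to the `P₃` in `C`, giving an induced `2P₃`. This contradicts minimality, so `K` meets every induced
`P₃`, i.e. `G - K` is a cluster graph. -/

namespace SimpleGraph

theorem Reachable.mem_of_adj_closed_s4 {H : SimpleGraph V} {D : Set V}
    (hD : ∀ x y, x ∈ D → H.Adj x y → y ∈ D) {x y : V} (h : H.Reachable x y) (hx : x ∈ D) :
    y ∈ D := by
  obtain ⟨q⟩ := h
  by_contra hy
  obtain ⟨d, -, hd₁, hd₂⟩ := q.exists_boundary_dart D hx hy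
  exact hd₂ (hD _ _ hd₁ d.adj)

namespace ComponentCompl

variable {G : SimpleGraph V} {K : Set V}

theorem connected_induce (C : G.ComponentCompl K) : (G.induce (C : Set V)).Connected := by
  classical
  obtain ⟨v, hv, rfl⟩ := C.exists_eq_mk
  refine induce_connected_of_patches v (G.componentComplMk_mem hv) fun {w} hw => ?_
  obtain ⟨q⟩ := ConnectedComponent.exact hw.choose_spec.symm
  let q' := q.map (Embedding.induce Kᶜ).toHom
  refine ⟨{x | x ∈ q'.support}, fun x hx => ?_, q'.start_mem_support, q'.end_mem_support,
    q'.connected_induce_support.preconnected _ _⟩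
  obtain ⟨y, hy, rfl⟩ := List.mem_map.1 ((q.support_map _).symm ▸ hx : x ∈ _)
  exact ⟨y.2, ConnectedComponent.sound (q.takeUntil y hy).reachable.symm⟩

theorem subset_of_adj_closed (C : G.ComponentCompl K) {X : Set V}
    (hX : ∀ x y, x ∈ X → y ∉ K → G.Adj x y → y ∈ X) {x : V} (hxC : x ∈ C) (hxX : x ∈ X) :
    (C : Set V) ⊆ X := by
  intro y ⟨hyK, hy⟩
  obtain ⟨hxK, hx⟩ := hxC
  have hreach := ConnectedComponent.exact (hx.trans hy.symm)
  exact hreach.mem_of_adj_closed_s4 (D := {z : ↑Kᶜ | z.1 ∈ X})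
    (fun z z' hz hzz' => hX z z' hz z'.2 hzz') hxX

end ComponentCompl

end SimpleGraph

def ContainsInducedP3 (G : SimpleGraph V) (A : Set V) : Prop :=
  ∃ a b c, IsInducedP3 G a b c ∧ a ∈ A ∧ b ∈ A ∧ c ∈ A

def p3Part (G : SimpleGraph V) (K : Set V) : Set V :=
  {v | ∃ C : G.ComponentCompl K, v ∈ C ∧ ContainsInducedP3 G C}

variable {G : SimpleGraph V}

/-- The adjacency condition is `j ≡ i ± 1 (mod n)`, written without `%` for `i, j < n`. -/
theorem hasInducedCycle_of_nat {n : ℕ} (hn : 2 ≤ n) (g : ℕ → V) (hinj : Set.InjOn g (Set.Iio n))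
    (hadj : ∀ i < n, ∀ j < n,
      G.Adj (g i) (g j) ↔ (i + 1 = j ∨ j + 1 = i ∨ i + 1 = j + n ∨ j + 1 = i + n)) :
    HasInducedCycle G n := by
  have : NeZero n := ⟨by omega⟩
  have : Fact (1 < n) := ⟨by omega⟩
  have hsucc : ∀ x y : ZMod n, y = x + 1 ↔ (x.val + 1 = y.val ∨ x.val + 1 = y.val + n) := by
    intro x y
    rw [← (ZMod.val_injective n).eq_iff, ZMod.val_add, ZMod.val_one]
    have := x.val_lt
    have := y.val_lt
    rcases Nat.lt_or_ge (x.val + 1) n with h | h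
    · rw [Nat.mod_eq_of_lt h]; omega
    · rw [show x.val + 1 = n by omega, Nat.mod_self]; omega
  refine ⟨fun x => g x.val, fun x y hxy => ZMod.val_injective n ?_, fun x y => ?_⟩
  · exact hinj (Set.mem_Iio.2 x.val_lt) (Set.mem_Iio.2 y.val_lt) hxy
  · rw [hadj _ x.val_lt _ y.val_lt, hsucc, hsucc]
    omega

def consSeq (x : V) (p : ℕ → V) : ℕ → V
  | 0 => x
  | i + 1 => p i

@[simp] theorem consSeq_zero (x : V) (p : ℕ → V) : consSeq x p 0 = x := rfl

@[simp] theorem consSeq_succ (x : V) (p : ℕ → V) (i : ℕ) : consSeq x p (i + 1) = p i := rfl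

theorem injOn_consSeq {k : ℕ} {p : ℕ → V} {x : V} (hp : Set.InjOn p (Set.Iic k))
    (hx : ∀ i ≤ k, p i ≠ x) : Set.InjOn (consSeq x p) (Set.Iic (k + 1)) := by
  rintro (_ | i) hi (_ | j) hj hij
  all_goals simp only [Set.mem_Iic, consSeq_zero, consSeq_succ] at hi hj hij
  · rfl
  · exact absurd hij.symm (hx j (by omega))
  · exact absurd hij (hx i (by omega))
  · rw [hp (Set.mem_Iic.2 (by omega)) (Set.mem_Iic.2 (by omega)) hij]

def IsInducedPath (G : SimpleGraph V) (k : ℕ) (p : ℕ → V) : Prop :=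
  Set.InjOn p (Set.Iic k) ∧ ∀ i ≤ k, ∀ j ≤ k, G.Adj (p i) (p j) ↔ (i + 1 = j ∨ j + 1 = i)

namespace IsInducedPath

variable {k : ℕ} {p : ℕ → V}

theorem drop (hp : IsInducedPath G k p) (m : ℕ) :
    IsInducedPath G (k - m) (fun i => p (m + i)) := by
  refine ⟨fun i hi j hj hij => ?_, fun i hi j hj => ?_⟩ <;> rcases eq_or_ne i j with rfl | hne
  · rfl
  · simp only [Set.mem_Iic] at hi hj
    have := hp.1 (Set.mem_Iic.2 (by omega)) (Set.mem_Iic.2 (by omega)) hij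
    omega
  · simp
  · rw [hp.2 _ (by omega) _ (by omega)]
    omega

theorem cons (hp : IsInducedPath G k p) {x : V} (hx : ∀ i ≤ k, p i ≠ x ∧ (G.Adj x (p i) ↔ i = 0)) :
    IsInducedPath G (k + 1) (consSeq x p) := by
  refine ⟨injOn_consSeq hp.1 fun i hi => (hx i hi).1, ?_⟩
  rintro (_ | i) hi (_ | j) hj
  all_goals simp only [consSeq_zero, consSeq_succ]
  · simp
  · rw [(hx j (by omega)).2]; omega
  · rw [G.adj_comm, (hx i (by omega)).2]; omega
  · rw [hp.2 i (by omega) j (by omega)]; omega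

theorem hasInducedCycle_consSeq (hp : IsInducedPath G k p) {y : V}
    (hy : ∀ i ≤ k, p i ≠ y ∧ (G.Adj y (p i) ↔ i = 0 ∨ i = k)) :
    HasInducedCycle G (k + 2) := by
  refine hasInducedCycle_of_nat (by omega) (consSeq y p)
    ((injOn_consSeq hp.1 fun i hi => (hy i hi).1).mono fun i hi => Nat.le_of_lt_succ hi) ?_
  rintro (_ | i) hi (_ | j) hj
  all_goals simp only [consSeq_zero, consSeq_succ]
  · simp
  · rw [(hy j (by omega)).2]; omega
  · rw [G.adj_comm, (hy i (by omega)).2]; omega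
  · rw [hp.2 i (by omega) j (by omega)]; omega

end IsInducedPath

theorem IsChordal.le_one_of_isInducedPath (hG : IsChordal G) {k : ℕ} {p : ℕ → V}
    (hp : IsInducedPath G k p) {y : V} (hy : ∀ i ≤ k, p i ≠ y ∧ (G.Adj y (p i) ↔ i = 0 ∨ i = k)) :
    k ≤ 1 := by
  by_contra! hk
  exact hG (k + 2) (by omega) (hp.hasInducedCycle_consSeq hy)

/-- The chordal step: `t, p i₀, …, p k, s` with `i₀` the last neighbour of `t` would be an induced
cycle of length `k - i₀ + 3`. -/
theorem IsChordal.adj_last_of_isInducedPath (hG : IsChordal G) {k : ℕ} {p : ℕ → V}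
    (hp : IsInducedPath G k p) {s t : V} (hst : G.Adj s t)
    (hs : ∀ i ≤ k, p i ≠ s ∧ (G.Adj s (p i) ↔ i = k)) (ht : ∀ i ≤ k, p i ≠ t)
    (ht₀ : G.Adj t (p 0)) : G.Adj t (p k) := by
  obtain ⟨i₀, hi₀k, hi₀, hlast⟩ :
      ∃ i₀ ≤ k, G.Adj t (p i₀) ∧ ∀ j, i₀ < j → j ≤ k → ¬ G.Adj t (p j) := by
    classical
    exact ⟨_, Nat.findGreatest_le k, Nat.findGreatest_spec (P := fun i => G.Adj t (p i))
      (Nat.zero_le k) ht₀, fun j h₁ h₂ => Nat.findGreatest_is_greatest h₁ h₂⟩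
  have hpath : IsInducedPath G (k - i₀ + 1) (consSeq t (fun i => p (i₀ + i))) := by
    refine (hp.drop i₀).cons fun i hi => ⟨ht _ (by omega), ?_⟩
    rcases Nat.eq_zero_or_pos i with rfl | hi'
    · simpa using hi₀
    · exact iff_of_false (hlast _ (by omega) (by omega)) hi'.ne'
  have hcycle := hG.le_one_of_isInducedPath hpath (y := s) <| by
    rintro (_ | i) hi
    · exact ⟨hst.ne', by simpa using hst⟩
    · refine ⟨(hs _ (by omega)).1, ?_⟩
      rw [consSeq_succ, (hs _ (by omega)).2]
      omega
  rwa [show k = i₀ by omega]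

open SimpleGraph in
/-- Take a shortest path in `G[C]` from `u` to `B`: the distance from `u` indexes its vertices. -/
theorem exists_isInducedPath_to {C B : Set V} (hC : (G.induce C).Connected) {u : V} (hu : u ∈ C)
    (hB : (C ∩ B).Nonempty) :
    ∃ k p, p 0 = u ∧ p k ∈ B ∧ (∀ i ≤ k, p i ∈ C) ∧ (∀ i < k, p i ∉ B) ∧ IsInducedPath G k p := by
  classical
  set H := G.induce C
  have hex : ∃ n, ∃ w : C, (w : V) ∈ B ∧ H.dist ⟨u, hu⟩ w = n :=
    ⟨_, ⟨hB.some, hB.some_mem.1⟩, hB.some_mem.2, rfl⟩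
  obtain ⟨w, hwB, hw⟩ := Nat.find_spec hex
  have hmin : ∀ w' : C, (w' : V) ∈ B → Nat.find hex ≤ H.dist ⟨u, hu⟩ w' :=
    fun w' hw' => Nat.find_min' hex ⟨w', hw', rfl⟩
  obtain ⟨q, hq⟩ := hC.exists_walk_length_eq_dist ⟨u, hu⟩ w
  have hdist : ∀ i ≤ q.length, H.dist ⟨u, hu⟩ (q.getVert i) = i := by
    intro i hi
    have h₁ := dist_le (q.take i)
    have h₂ := dist_le (q.drop i)
    have h₃ := hC.dist_triangle (u := ⟨u, hu⟩) (v := q.getVert i) (w := w)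
    simp only [Walk.take_length, Walk.drop_length] at h₁ h₂
    omega
  refine ⟨q.length, fun i => q.getVert i, by simp, by simpa using hwB, fun i _ => (q.getVert i).2,
    fun i hi hiB => ?_, fun i hi j hj hij => ?_, fun i hi j hj => ⟨fun hadj => ?_, ?_⟩⟩
  · have := hmin _ hiB
    rw [hdist i hi.le] at this
    omega
  · rw [← hdist i hi, ← hdist j hj, Subtype.ext hij]
  · have hne : i ≠ j := by rintro rfl; exact hadj.ne rfl
    have := (show H.Adj (q.getVert i) (q.getVert j) from hadj).diff_dist_adj (u := ⟨u, hu⟩)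
    rw [hdist i hi, hdist j hj] at this
    omega
  · rintro (rfl | rfl)
    · exact q.adj_getVert_succ (by omega)
    · exact (q.adj_getVert_succ (by omega)).symm

theorem IsChordal.exists_adj_forall_of_isClique (hG : IsChordal G) {C : Set V}
    (hC : (G.induce C).Connected) (S : Finset V) (hS : G.IsClique (S : Set V))
    (hSC : ∀ s ∈ S, s ∉ C) (hSadj : ∀ s ∈ S, ∃ c ∈ C, G.Adj c s) :
    ∃ u ∈ C, ∀ s ∈ S, G.Adj u s := by
  classical
  induction S using Finset.induction_on with
  | empty => exact ⟨_, hC.nonempty.some.2, by simp⟩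
  | @insert s T hsT ih =>
    simp only [Finset.mem_insert, forall_eq_or_imp] at hSC hSadj ⊢
    obtain ⟨u, huC, huT⟩ := ih (hS.subset (by simp)) hSC.2 hSadj.2
    by_cases hus : G.Adj u s
    · exact ⟨u, huC, hus, huT⟩
    obtain ⟨c, hcC, hcs⟩ := hSadj.1
    obtain ⟨k, p, hp₀, hpk, hpC, hpB, hp⟩ :=
      exists_isInducedPath_to hC huC (B := {v | G.Adj v s}) ⟨c, hcC, hcs⟩
    refine ⟨p k, hpC k le_rfl, hpk, fun t ht => ?_⟩
    have hpt : ∀ i ≤ k, p i ≠ t := fun i hi h => hSC.2 t ht (h ▸ hpC i hi)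
    refine (hG.adj_last_of_isInducedPath hp (s := s) (t := t) ?_ (fun i hi => ⟨?_, ?_⟩) hpt
      (hp₀ ▸ (huT t ht).symm)).symm
    · exact hS (by simp) (by simp [ht]) (by rintro rfl; exact hsT ht)
    · exact fun h => hSC.1 (h ▸ hpC i hi)
    · rw [G.adj_comm]
      exact ⟨fun h => by_contra fun hik => hpB i (by omega) h, fun h => h ▸ hpk⟩

theorem isHittingSet_of_forall_isInducedP3 {K : Set V}
    (h : ∀ a b c, IsInducedP3 G a b c → a ∈ K ∨ b ∈ K ∨ c ∈ K) : IsHittingSet G K := by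
  intro x y hxy hreach
  have hclosed : ∀ z z', (z = x ∨ (G.induce Kᶜ).Adj x z) → (G.induce Kᶜ).Adj z z' →
      z' = x ∨ (G.induce Kᶜ).Adj x z' := by
    rintro z z' (rfl | hxz) hzz'
    · exact Or.inr hzz'
    · by_contra! hz'
      rcases h _ _ _ ⟨fun h => hz'.1 (Subtype.ext h).symm, hxz, hzz', hz'.2⟩ with h | h | h
      exacts [x.2 h, z.2 h, z'.2 h]
  exact (hreach.mem_of_adj_closed_s4 (D := {w | w = x ∨ (G.induce Kᶜ).Adj x w}) hclosed
    (Or.inl rfl)).resolve_left hxy.symm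

theorem mem_p3Part_of_isInducedP3 {K : Set V} {a b c : V} (h : IsInducedP3 G a b c)
    (ha : a ∉ K) (hb : b ∉ K) (hc : c ∉ K) : a ∈ p3Part G K := by
  have haC := G.componentComplMk_mem ha
  have hbC := SimpleGraph.ComponentCompl.mem_of_adj a b haC hb h.2.1
  exact ⟨_, haC, a, b, c, h, haC, hbC, SimpleGraph.ComponentCompl.mem_of_adj b c hbC hc h.2.2.1⟩

/-- An induced `P₃` of `G - K` outside `C` would be anticomplete to the one in `C`. -/
theorem p3Part_subset_of_adj_closed (h2p3 : ¬ HasInduced2P3 G) {C K : Set V}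
    (hP3 : ContainsInducedP3 G C) (hC : ∀ x y, x ∈ C → y ∉ K → G.Adj x y → y ∈ C) :
    p3Part G K ⊆ C := by
  rintro v ⟨D, hvD, a', b', c', hP3', ha', hb', hc'⟩
  by_cases hmeet : a' ∈ C ∨ b' ∈ C ∨ c' ∈ C
  · obtain ⟨x, hxD, hxC⟩ : ∃ x ∈ D, x ∈ C := by
      rcases hmeet with h | h | h
      exacts [⟨a', ha', h⟩, ⟨b', hb', h⟩, ⟨c', hc', h⟩]
    exact D.subset_of_adj_closed hC hxD hxC hvD
  · simp only [not_or] at hmeet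
    obtain ⟨a, b, c, hP3, ha, hb, hc⟩ := hP3
    refine absurd ⟨a, b, c, a', b', c', hP3, hP3', fun x hx y hy => ?_⟩ h2p3
    have hxC : x ∈ C := by rcases hx with rfl | rfl | rfl <;> assumption
    have hy : y ∉ C ∧ y ∉ K := by
      rcases hy with rfl | rfl | rfl
      exacts [⟨hmeet.1, D.notMem_of_mem ha'⟩, ⟨hmeet.2.1, D.notMem_of_mem hb'⟩,
        ⟨hmeet.2.2, D.notMem_of_mem hc'⟩]
    exact ⟨fun h => hy.1 (h ▸ hxC), fun h => hy.1 (hC x y hxC hy.2 h)⟩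

/-- Replacing `K` by the neighbourhood of a `P₃`-component `C`, together with a vertex of `C`
complete to it, removes that vertex from `p3Part` and adds nothing. -/
theorem exists_p3Part_ssubset [Finite V] (hG : IsChordal G) (h2p3 : ¬ HasInduced2P3 G)
    {K : Set V} (hK : G.IsClique K) (hne : (p3Part G K).Nonempty) :
    ∃ K', G.IsClique K' ∧ p3Part G K' ⊂ p3Part G K := by
  obtain ⟨-, C, -, hP3⟩ := hne
  set S := {s | s ∉ C ∧ ∃ x ∈ C, G.Adj x s}
  have hSK : S ⊆ K := fun s ⟨hsC, x, hxC, hxs⟩ =>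
    by_contra fun hsK => hsC (SimpleGraph.ComponentCompl.mem_of_adj x s hxC hsK hxs)
  have hS : G.IsClique S := hK.subset hSK
  obtain ⟨u, huC, huS⟩ := hG.exists_adj_forall_of_isClique C.connected_induce
    (S.toFinite.toFinset) (by simpa using hS) (by simp +contextual [S])
    (by simp +contextual [S])
  refine ⟨insert u S, hS.insert fun s hs _ => huS s (by simpa using hs), ?_⟩
  have hsub : p3Part G (insert u S) ⊆ C := p3Part_subset_of_adj_closed h2p3 hP3
    fun x y hxC hy hxy => by_contra fun hyC => hy (Set.mem_insert_of_mem u ⟨hyC, x, hxC, hxy⟩)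
  have hCsub : (C : Set V) ⊆ p3Part G K := fun v hv => ⟨C, hv, hP3⟩
  refine (Set.ssubset_iff_of_subset (hsub.trans hCsub)).2 ⟨u, hCsub huC, ?_⟩
  rintro ⟨D, huD, -⟩
  exact D.notMem_of_mem huD (Set.mem_insert u S)

/-- Every chordal, 2P₃-free graph contains a hitting clique. -/
theorem stmt_4 [Fintype V] (G : SimpleGraph V)
    (hchordal : IsChordal G) (h2p3 : ¬ HasInduced2P3 G) :
    ∃ K : Set V, G.IsClique K ∧ IsHittingSet G K := by
  obtain ⟨K, hK, hmin⟩ := Set.exists_min_image {K : Set V | G.IsClique K}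
    (fun K => (p3Part G K).ncard) (Set.toFinite _) ⟨∅, by simp⟩
  refine ⟨K, hK, isHittingSet_of_forall_isInducedP3 fun a b c hP3 => ?_⟩
  by_contra! hmiss
  obtain ⟨K', hK', hlt⟩ := exists_p3Part_ssubset hchordal h2p3 hK
    ⟨a, mem_p3Part_of_isInducedP3 hP3 hmiss.1 hmiss.2.1 hmiss.2.2⟩
  exact (hmin K' hK').not_gt (Set.ncard_lt_ncard hlt)
end

section
/- Let H be a graph with a universal vertex v_0 and H' = H − v_0. Then the minimum cost OPT(H,c) of a hitting set of H equals the minimum of c(v_0) + OPT(H', c|_{H'}) and c(V(H')) − ω(H', c|_{H'}), where ω denotes the maximum weight of a clique. -/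
variable {V : Type*}

/-!
Split a hitting set `X` of `H` according to whether it contains `v₀`. If it does, then
`X \ {v₀}` is a hitting set of `H' = H - v₀` and conversely, since both leave the same graph
behind. If it does not, then `v₀` survives in `H - X` and is adjacent to every other survivor,
so `H - X` is connected and hence complete: `V(H) \ X` is a clique containing `v₀`, i.e.
`X` is the complement in `V(H')` of a clique of `H'`.
-/

open SimpleGraph Finset

section Optimum

variable (G : SimpleGraph V) (c : V → ℕ)

theorem OPT_le_sum {X : Finset V} (hX : IsHittingSet G ↑X) : OPT G c ≤ ∑ v ∈ X, c v :=
  Nat.sInf_le ⟨X, hX, rfl⟩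

variable [Fintype V]

theorem exists_isHittingSet_sum_eq_OPT :
    ∃ X : Finset V, IsHittingSet G ↑X ∧ ∑ v ∈ X, c v = OPT G c :=
  Nat.sInf_mem (s := {n | ∃ X : Finset V, IsHittingSet G ↑X ∧ ∑ v ∈ X, c v = n})
    ⟨_, univ, fun u => absurd (mem_univ u.1) u.2, rfl⟩

theorem bddAbove_clique_weights :
    BddAbove {n | ∃ K : Finset V, G.IsClique (↑K : Set V) ∧ ∑ v ∈ K, c v = n} :=
  ⟨∑ v, c v, fun _ ⟨K, _, h⟩ => h ▸ sum_le_sum_of_subset (subset_univ K)⟩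

theorem exists_isClique_sum_eq_omegaW :
    ∃ K : Finset V, G.IsClique (↑K : Set V) ∧ ∑ v ∈ K, c v = omegaW G c :=
  Nat.sSup_mem (s := {n | ∃ K : Finset V, G.IsClique (↑K : Set V) ∧ ∑ v ∈ K, c v = n})
    ⟨0, ∅, by simp, by simp⟩ (bddAbove_clique_weights G c)

theorem sum_le_omegaW {K : Finset V} (hK : G.IsClique (↑K : Set V)) :
    ∑ v ∈ K, c v ≤ omegaW G c :=
  le_csSup (bddAbove_clique_weights G c) ⟨K, hK, rfl⟩

end Optimum

section ClusterGraph

variable {W : Type*} {G : SimpleGraph V} {G' : SimpleGraph W}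

theorem IsClusterGraph.of_embedding (f : G ↪g G') (h : IsClusterGraph G') :
    IsClusterGraph G :=
  fun _ _ hne huv => f.map_adj_iff.1 (h _ _ (f.injective.ne hne) (huv.map f.toHom))

theorem SimpleGraph.Iso.isClusterGraph_iff (f : G ≃g G') :
    IsClusterGraph G ↔ IsClusterGraph G' :=
  ⟨.of_embedding f.symm.toEmbedding, .of_embedding f.toEmbedding⟩

theorem isHittingSet_iff_isClique_compl {X : Set V} {v₀ : V}
    (huniv : ∀ v, v ≠ v₀ → G.Adj v₀ v) (hv₀ : v₀ ∉ X) :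
    IsHittingSet G X ↔ G.IsClique Xᶜ := by
  refine ⟨fun hX u hu w hw huw => ?_,
    fun hK u w huw _ => hK u.2 w.2 (Subtype.val_injective.ne huw)⟩
  let z : (Xᶜ : Set V) := ⟨v₀, hv₀⟩
  have reachable_from_z (x : (Xᶜ : Set V)) : (G.induce Xᶜ).Reachable z x := by
    obtain rfl | hx := eq_or_ne x z
    · exact .refl _
    · exact Adj.reachable (G := G.induce Xᶜ) (huniv x.1 fun h => hx (Subtype.ext h))
  exact hX ⟨u, hu⟩ ⟨w, hw⟩ (by simpa using huw)
    ((reachable_from_z _).symm.trans (reachable_from_z _))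

end ClusterGraph

abbrev SimpleGraph.deleteVertex (G : SimpleGraph V) (v : V) : SimpleGraph {w // w ≠ v} :=
  G.comap Subtype.val

section UniversalVertex

variable [DecidableEq V] {H : SimpleGraph V} {v₀ : V}

theorem isHittingSet_deleteVertex_iff (X' : Finset {v // v ≠ v₀}) :
    IsHittingSet (H.deleteVertex v₀) ↑X' ↔
      IsHittingSet H ↑(insert v₀ (X'.map (Function.Embedding.subtype _))) := by
  refine Iso.isClusterGraph_iff
    { toFun := fun w => ⟨w.1.1, ?_⟩
      invFun := fun v => ⟨⟨v.1, ?_⟩, ?_⟩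
      left_inv := fun _ => rfl
      right_inv := fun _ => rfl
      map_rel_iff' := Iff.rfl }
  · have hw : w.1 ∉ X' := w.2
    simp [w.1.2, hw]
  · have hv := v.2
    simp_all
  · have hv := v.2
    simp_all

theorem isHittingSet_map_subtype_iff_isClique_compl (huniv : ∀ v, v ≠ v₀ → H.Adj v₀ v)
    (X' : Finset {v // v ≠ v₀}) :
    IsHittingSet H ↑(X'.map (Function.Embedding.subtype _)) ↔
      (H.deleteVertex v₀).IsClique (↑X' : Set {v // v ≠ v₀})ᶜ := by
  have hcompl : (↑(X'.map (Function.Embedding.subtype _)) : Set V)ᶜ =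
      insert v₀ (Subtype.val '' (↑X' : Set {v // v ≠ v₀})ᶜ) := by
    ext v
    by_cases hv : v = v₀ <;> simp [hv]
  rw [isHittingSet_iff_isClique_compl huniv (by simp), hcompl, isClique_insert]
  refine (and_iff_left ?_).trans isClique_induce_iff.symm
  rintro _ ⟨x, -, rfl⟩ -
  exact huniv x x.2

theorem map_subtype_ne (X : Finset V) :
    (X.subtype (· ≠ v₀)).map (Function.Embedding.subtype _) = X.erase v₀ := by
  rw [subtype_map, filter_ne']

variable (c : V → ℕ)

theorem sum_insert_map_subtype (X' : Finset {v // v ≠ v₀}) :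
    ∑ v ∈ insert v₀ (X'.map (Function.Embedding.subtype _)), c v =
      c v₀ + ∑ v ∈ X', c v := by
  rw [sum_insert (by simp), sum_map]
  rfl

theorem add_OPT_deleteVertex_le_sum {X : Finset V} (hX : IsHittingSet H ↑X) (hv₀ : v₀ ∈ X) :
    c v₀ + OPT (H.deleteVertex v₀) (fun v => c v.1) ≤ ∑ v ∈ X, c v := by
  obtain ⟨X', rfl⟩ : ∃ X' : Finset {v // v ≠ v₀},
      insert v₀ (X'.map (Function.Embedding.subtype _)) = X :=
    ⟨_, by rw [map_subtype_ne, insert_erase hv₀]⟩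
  rw [sum_insert_map_subtype]
  exact add_le_add_right (OPT_le_sum _ _ ((isHittingSet_deleteVertex_iff X').2 hX)) _

variable [Fintype V]

theorem OPT_le_add_OPT_deleteVertex :
    OPT H c ≤ c v₀ + OPT (H.deleteVertex v₀) (fun v => c v.1) := by
  obtain ⟨X', hX', hcost⟩ :=
    exists_isHittingSet_sum_eq_OPT (H.deleteVertex v₀) (fun v => c v.1)
  calc OPT H c ≤ _ := OPT_le_sum H c ((isHittingSet_deleteVertex_iff X').1 hX')
    _ = _ := by rw [sum_insert_map_subtype, hcost]

theorem sum_map_subtype_eq_sub (X' : Finset {v // v ≠ v₀}) :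
    ∑ v ∈ X'.map (Function.Embedding.subtype _), c v =
      ∑ v : {v // v ≠ v₀}, c v.1 - ∑ v ∈ X'ᶜ, c v.1 := by
  rw [sum_map]
  exact eq_tsub_of_add_eq (sum_add_sum_compl X' _)

theorem OPT_le_sum_sub_omegaW (huniv : ∀ v, v ≠ v₀ → H.Adj v₀ v) :
    OPT H c ≤
      ∑ v : {v // v ≠ v₀}, c v.1 - omegaW (H.deleteVertex v₀) (fun v => c v.1) := by
  obtain ⟨K, hK, hweight⟩ :=
    exists_isClique_sum_eq_omegaW (H.deleteVertex v₀) (fun v => c v.1)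
  have hX : IsHittingSet H ↑(Kᶜ.map (Function.Embedding.subtype _)) := by
    rwa [isHittingSet_map_subtype_iff_isClique_compl huniv, coe_compl, compl_compl]
  calc OPT H c ≤ _ := OPT_le_sum H c hX
    _ = _ := by rw [sum_map_subtype_eq_sub, compl_compl, hweight]

theorem sum_sub_omegaW_le_sum (huniv : ∀ v, v ≠ v₀ → H.Adj v₀ v) {X : Finset V}
    (hX : IsHittingSet H ↑X) (hv₀ : v₀ ∉ X) :
    ∑ v : {v // v ≠ v₀}, c v.1 - omegaW (H.deleteVertex v₀) (fun v => c v.1) ≤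
      ∑ v ∈ X, c v := by
  obtain ⟨X', rfl⟩ :
      ∃ X' : Finset {v // v ≠ v₀}, X'.map (Function.Embedding.subtype _) = X :=
    ⟨_, by rw [map_subtype_ne, erase_eq_of_notMem hv₀]⟩
  have hK : (H.deleteVertex v₀).IsClique (↑X'ᶜ : Set {v // v ≠ v₀}) := by
    rw [coe_compl]
    exact (isHittingSet_map_subtype_iff_isClique_compl huniv X').1 hX
  rw [sum_map_subtype_eq_sub]
  exact tsub_le_tsub_left (sum_le_omegaW _ _ hK) _

end UniversalVertex

/-- If v₀ is universal in H and H' = H − v₀, then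
OPT(H,c) = min( c(v₀) + OPT(H',c') , c(V(H')) − ω(H',c') ). -/
theorem stmt_5 [Fintype V] [DecidableEq V] (H : SimpleGraph V) (v0 : V)
    (huniv : ∀ v, v ≠ v0 → H.Adj v0 v) (c : V → ℕ) :
    OPT H c =
      min (c v0 + OPT (H.comap (Subtype.val : {v : V // v ≠ v0} → V)) (fun v => c v.1))
        ((∑ v : {v : V // v ≠ v0}, c v.1) -
          omegaW (H.comap (Subtype.val : {v : V // v ≠ v0} → V)) (fun v => c v.1)) := by
  refine le_antisymm (le_min (OPT_le_add_OPT_deleteVertex c) (OPT_le_sum_sub_omegaW c huniv)) ?_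
  obtain ⟨X, hX, hcost⟩ := exists_isHittingSet_sum_eq_OPT H c
  rw [← hcost]
  by_cases hv0 : v0 ∈ X
  · exact min_le_of_left_le (add_OPT_deleteVertex_le_sum c hX hv0)
  · exact min_le_of_right_le (sum_sub_omegaW_le_sum c huniv hX hv0)
end

section
/- Let G be a graph, K_0 a clique of G that is also a hitting set, and suppose there is a family of stable sets {S_v : v ∈ K_0} such that (P1) every vertex of G lies in some S_v, (P2) each S_v contains v and at least one other vertex, and (P3) for every two distinct v, v' ∈ K_0, the subgraph induced by S_v ∪ S_{v'} contains an induced P_3. Let c = Σ_{v ∈ K_0} χ^{S_v} (so c(u) counts the stable sets containing u). Then c(u) ≥ 1 for all u, c(V(G)) ≥ 2ω(G,c), and OPT(G,c) ≥ ω(G,c) − 1 = |K_0| − 1. -/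
variable {V : Type*}

/-!
Each stable set `S v` meets a clique in at most one vertex, so counting the pairs `(u, v)` with
`u ∈ K ∩ S v` shows that every clique `K` has `c`-weight at most `|K₀|`, with equality for `K₀`
itself; counting over all of `V` gives `c(V) = ∑ |S v| ≥ 2|K₀|`. A hitting set `X` must meet the
induced `P₃` inside `S v ∪ S v'`, so `X` misses at most one `S v`, and the same count gives
`c(X) ≥ |K₀| - 1`.
-/

open Finset SimpleGraph

lemma SimpleGraph.IsClique.card_inter_le_one_of_isIndepSet [DecidableEq V] {G : SimpleGraph V}
    {K S : Finset V} (hK : G.IsClique (K : Set V)) (hS : G.IsIndepSet (S : Set V)) :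
    #(K ∩ S) ≤ 1 := by
  refine card_le_one.mpr fun a ha b hb => by_contra fun hab => ?_
  rw [mem_inter] at ha hb
  exact hS ha.2 hb.2 hab (hK ha.1 hb.1 hab)

lemma Finset.card_sub_one_le_sum {ι : Type*} {s : Finset ι} {f : ι → ℕ}
    (h : #{i ∈ s | f i = 0} ≤ 1) : #s - 1 ≤ ∑ i ∈ s, f i := by
  have hsplit := card_filter_add_card_filter_not (s := s) (fun i => f i = 0)
  calc #s - 1 ≤ #{i ∈ s | ¬f i = 0} := by omega
    _ = ∑ i ∈ s with ¬f i = 0, 1 := (card_eq_sum_ones _)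
    _ ≤ ∑ i ∈ s with ¬f i = 0, f i := sum_le_sum fun i hi => by
        have := (mem_filter.mp hi).2
        omega
    _ ≤ ∑ i ∈ s, f i := sum_le_sum_of_subset (filter_subset _ _)

lemma isHittingSet_univ (G : SimpleGraph V) : IsHittingSet G Set.univ := by
  rintro ⟨u, hu⟩
  simp at hu

lemma IsHittingSet.mem_of_isInducedP3 {G : SimpleGraph V} {X : Set V} (hX : IsHittingSet G X)
    {a b w : V} (h : IsInducedP3 G a b w) : a ∈ X ∨ b ∈ X ∨ w ∈ X := by
  by_contra! hout
  obtain ⟨ha, hb, hw⟩ := hout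
  obtain ⟨haw, hab, hbw, hnaw⟩ := h
  have hab' : (G.induce Xᶜ).Adj ⟨a, ha⟩ ⟨b, hb⟩ := hab
  have hbw' : (G.induce Xᶜ).Adj ⟨b, hb⟩ ⟨w, hw⟩ := hbw
  exact hnaw (hX _ _ (by simpa using haw) (hab'.reachable.trans hbw'.reachable))

lemma le_OPT [Fintype V] {G : SimpleGraph V} {c : V → ℕ} {n : ℕ}
    (h : ∀ X : Finset V, IsHittingSet G X → n ≤ ∑ v ∈ X, c v) : n ≤ OPT G c :=
  le_csInf ⟨_, univ, by simpa using isHittingSet_univ G, rfl⟩ <| by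
    rintro _ ⟨X, hX, rfl⟩
    exact h X hX

lemma omegaW_eq_of_isClique {G : SimpleGraph V} {c : V → ℕ} {K : Finset V}
    (hK : G.IsClique (K : Set V))
    (hmax : ∀ K' : Finset V, G.IsClique (K' : Set V) → ∑ v ∈ K', c v ≤ ∑ v ∈ K, c v) :
    omegaW G c = ∑ v ∈ K, c v :=
  IsGreatest.csSup_eq ⟨⟨K, hK, rfl⟩, by rintro _ ⟨K', hK', rfl⟩; exact hmax K' hK'⟩

section CoverCount

variable [DecidableEq V] {G : SimpleGraph V} (K0 : Finset V) (S : V → Finset V)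

lemma sum_card_filter_mem_eq_sum_card_inter (X : Finset V) :
    ∑ u ∈ X, #{v ∈ K0 | u ∈ S v} = ∑ v ∈ K0, #(X ∩ S v) := by
  simpa [bipartiteAbove, bipartiteBelow, filter_mem_eq_inter] using
    sum_card_bipartiteAbove_eq_sum_card_bipartiteBelow (s := X) (t := K0)
      (r := fun u v => u ∈ S v)

variable {K0 S}

lemma sum_card_inter_le_of_isClique (hS : ∀ v ∈ K0, G.IsIndepSet (S v : Set V))
    {K : Finset V} (hK : G.IsClique (K : Set V)) : ∑ v ∈ K0, #(K ∩ S v) ≤ #K0 := by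
  simpa using sum_le_card_nsmul K0 _ 1 fun v hv =>
    hK.card_inter_le_one_of_isIndepSet (hS v hv)

lemma sum_card_inter_self (hK0 : G.IsClique (K0 : Set V))
    (hS : ∀ v ∈ K0, G.IsIndepSet (S v : Set V)) (hmem : ∀ v ∈ K0, v ∈ S v) :
    ∑ v ∈ K0, #(K0 ∩ S v) = #K0 := by
  refine le_antisymm (sum_card_inter_le_of_isClique hS hK0) ?_
  simpa using card_nsmul_le_sum K0 _ 1 fun v hv =>
    Nat.one_le_iff_ne_zero.mpr <| card_ne_zero.mpr ⟨v, mem_inter.mpr ⟨hv, hmem v hv⟩⟩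

lemma card_filter_card_inter_eq_zero_le_one {X : Finset V} (hX : IsHittingSet G X)
    (hP3 : ∀ v ∈ K0, ∀ v' ∈ K0, v ≠ v' →
      ∃ a b w : V, a ∈ S v ∪ S v' ∧ b ∈ S v ∪ S v' ∧ w ∈ S v ∪ S v' ∧ IsInducedP3 G a b w) :
    #{v ∈ K0 | #(X ∩ S v) = 0} ≤ 1 := by
  refine card_le_one.mpr fun v hv v' hv' => by_contra fun hne => ?_
  rw [mem_filter, card_eq_zero, ← disjoint_iff_inter_eq_empty] at hv hv'
  obtain ⟨a, b, w, ha, hb, hw, hP⟩ := hP3 v hv.1 v' hv'.1 hne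
  have hdisj : Disjoint X (S v ∪ S v') := disjoint_union_right.mpr ⟨hv.2, hv'.2⟩
  rcases hX.mem_of_isInducedP3 hP with h | h | h
  exacts [disjoint_left.mp hdisj h ha, disjoint_left.mp hdisj h hb, disjoint_left.mp hdisj h hw]

end CoverCount

theorem stmt_7_general [Fintype V] [DecidableEq V] (G : SimpleGraph V) (K0 : Finset V)
    (hclique : G.IsClique (↑K0 : Set V))
    (S : V → Finset V)
    (hstable : ∀ v ∈ K0, (Gᶜ).IsClique (↑(S v) : Set V))
    (hP1 : ∀ u : V, ∃ v ∈ K0, u ∈ S v)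
    (hP2 : ∀ v ∈ K0, v ∈ S v ∧ 2 ≤ (S v).card)
    (hP3 : ∀ v ∈ K0, ∀ v' ∈ K0, v ≠ v' →
      ∃ a b w : V, a ∈ S v ∪ S v' ∧ b ∈ S v ∪ S v' ∧ w ∈ S v ∪ S v' ∧ IsInducedP3 G a b w)
    (c : V → ℕ) (hc : ∀ u, c u = (K0.filter (fun v => u ∈ S v)).card) :
    (∀ u, 1 ≤ c u) ∧ 2 * omegaW G c ≤ ∑ u, c u ∧
      omegaW G c = K0.card ∧ K0.card - 1 ≤ OPT G c := by
  have hsum (X : Finset V) : ∑ u ∈ X, c u = ∑ v ∈ K0, #(X ∩ S v) := by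
    simp only [hc]
    exact sum_card_filter_mem_eq_sum_card_inter K0 S X
  have hindep v (hv : v ∈ K0) : G.IsIndepSet (S v : Set V) :=
    (isClique_compl G).mp (hstable v hv)
  have hK0 : ∑ v ∈ K0, #(K0 ∩ S v) = #K0 :=
    sum_card_inter_self hclique hindep fun v hv => (hP2 v hv).1
  have homega : omegaW G c = #K0 := by
    refine (omegaW_eq_of_isClique hclique fun K hK => ?_).trans (by rw [hsum, hK0])
    rw [hsum, hsum, hK0]
    exact sum_card_inter_le_of_isClique hindep hK
  refine ⟨fun u => ?_, ?_, homega, le_OPT fun X hX => ?_⟩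
  · obtain ⟨v, hv, hu⟩ := hP1 u
    exact hc u ▸ card_pos.mpr ⟨v, mem_filter.mpr ⟨hv, hu⟩⟩
  · rw [homega, hsum]
    simpa [mul_comm] using card_nsmul_le_sum K0 _ 2 fun v hv => (hP2 v hv).2
  · rw [hsum]
    exact card_sub_one_le_sum (card_filter_card_inter_eq_zero_le_one hX hP3)

/-- Given a hitting clique K₀ and a family of stable sets S_v (v ∈ K₀) satisfying (P1)–(P3),
the cost function c = Σ_{v ∈ K₀} χ^{S_v} satisfies c ≥ 1 everywhere, c(V) ≥ 2ω(G,c),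
ω(G,c) = |K₀|, and OPT(G,c) ≥ |K₀| − 1. -/
theorem stmt_7 [Fintype V] [DecidableEq V] (G : SimpleGraph V) (K0 : Finset V)
    (hclique : G.IsClique (↑K0 : Set V)) (hhit : IsHittingSet G ↑K0)
    (S : V → Finset V)
    (hstable : ∀ v ∈ K0, (Gᶜ).IsClique (↑(S v) : Set V))
    (hP1 : ∀ u : V, ∃ v ∈ K0, u ∈ S v)
    (hP2 : ∀ v ∈ K0, v ∈ S v ∧ 2 ≤ (S v).card)
    (hP3 : ∀ v ∈ K0, ∀ v' ∈ K0, v ≠ v' →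
      ∃ a b w : V, a ∈ S v ∪ S v' ∧ b ∈ S v ∪ S v' ∧ w ∈ S v ∪ S v' ∧ IsInducedP3 G a b w)
    (c : V → ℕ) (hc : ∀ u, c u = (K0.filter (fun v => u ∈ S v)).card) :
    (∀ u, 1 ≤ c u) ∧ 2 * omegaW G c ≤ ∑ u, c u ∧
      omegaW G c = K0.card ∧ K0.card - 1 ≤ OPT G c :=
  stmt_7_general G K0 hclique S hstable hP1 hP2 hP3 c hc
end

section
/- Let H be a graph, v_0 ∈ V(H), and v a vertex at distance exactly 2 from v_0, such that every pair of true twins in H[N[v_0]] has a distinguisher in H. Define u ≡ u' for u, u' ∈ N[v_0] if u = u' or u, u' are true twins in H − v. Then every equivalence class of ≡ has size at most 2. -/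
variable {V : Type*}

/-!
Since `v ∉ N[v₀]`, true twins of `H − v` inside `N[v₀]` are true twins of `H[N[v₀]]`, so they have a
distinguisher in `H`; every vertex other than `v` sees them alike, so that distinguisher is `v`.
But `v` cannot distinguish all three pairs of a triangle: adjacency to `v` takes only two values.
-/

namespace TrueTwinsIn

variable {G : SimpleGraph V} {A B : Set V} {u u' : V}

theorem mono (h : TrueTwinsIn G A u u') (hBA : B ⊆ A) (hu : u ∈ B) (hu' : u' ∈ B) :
    TrueTwinsIn G B u u' :=
  ⟨hu, hu', h.2.2.1, fun w hw => h.2.2.2 w (hBA hw)⟩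

theorem adj_iff_of_ne {z : V} (h : TrueTwinsIn G A u u') (hz : z ∈ A) (hzu : z ≠ u)
    (hzu' : z ≠ u') : G.Adj z u ↔ G.Adj z u' := by
  simpa only [G.adj_comm z] using h.2.2.2 z hz hzu hzu'

theorem eq_of_distinguishes {v z : V} (h : TrueTwinsIn G {v}ᶜ u u') (hzu : z ≠ u) (hzu' : z ≠ u')
    (hz : ¬ (G.Adj z u ↔ G.Adj z u')) : z = v := by
  by_contra hzv
  exact hz (h.adj_iff_of_ne hzv hzu hzu')

end TrueTwinsIn

/-- If v is at distance exactly 2 from v₀ and every pair of true twins in H[N[v₀]] has a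
distinguisher, then the relation "equal or true twins in H − v" on N[v₀] has all
equivalence classes of size at most 2 (no three distinct pairwise related vertices). -/
theorem stmt_9 (H : SimpleGraph V) (v0 v : V)
    (hv : v ≠ v0 ∧ ¬ H.Adj v0 v ∧ ∃ z, H.Adj v0 z ∧ H.Adj z v)
    (hdisting : ∀ u u' : V,
      TrueTwinsIn H (insert v0 (H.neighborSet v0)) u u' →
      ∃ z : V, z ≠ u ∧ z ≠ u' ∧
        ((H.Adj z u ∧ ¬ H.Adj z u') ∨ (¬ H.Adj z u ∧ H.Adj z u'))) :
    ∀ u u' u'' : V,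
      u ∈ insert v0 (H.neighborSet v0) → u' ∈ insert v0 (H.neighborSet v0) →
      u'' ∈ insert v0 (H.neighborSet v0) →
      u ≠ u' → u' ≠ u'' → u ≠ u'' →
      ¬ (TrueTwinsIn H ({v}ᶜ : Set V) u u' ∧ TrueTwinsIn H ({v}ᶜ : Set V) u' u'' ∧
          TrueTwinsIn H ({v}ᶜ : Set V) u u'') := by
  rintro u u' u'' hu hu' hu'' - - - ⟨h₁, h₂, h₃⟩
  have hvN : insert v0 (H.neighborSet v0) ⊆ ({v}ᶜ : Set V) := by
    rintro w (rfl | hw) rfl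
    exacts [hv.1 rfl, hv.2.1 hw]
  have v_distinguishes : ∀ a b, a ∈ insert v0 (H.neighborSet v0) →
      b ∈ insert v0 (H.neighborSet v0) → TrueTwinsIn H ({v}ᶜ : Set V) a b →
      ¬ (H.Adj v a ↔ H.Adj v b) := by
    intro a b ha hb hab
    obtain ⟨z, hza, hzb, hz⟩ := hdisting a b (hab.mono hvN ha hb)
    have hz' : ¬ (H.Adj z a ↔ H.Adj z b) := by tauto
    exact hab.eq_of_distinguishes hza hzb hz' ▸ hz'
  have := v_distinguishes u u' hu hu' h₁
  have := v_distinguishes u' u'' hu' hu'' h₂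
  have := v_distinguishes u u'' hu hu'' h₃
  tauto
end

section
/- Let G be a cycle on n ≥ 4 vertices with nonnegative rational vertex costs c, and suppose x is a vector assigning x_v = 1/3 to every vertex (which satisfies x_u + x_v + x_w ≥ 1 for every induced P_3). Then there exists a hitting set X of G with c(X) ≤ (3/2) · Σ_v c(v) x_v = (1/2) · c(V(G)). -/
variable {V : Type*}

/-!
Take a 2-colouring of the cycle maximising the number of bichromatic edges. Flipping a vertex
all of whose neighbours share its colour would increase that number, so every vertex has a
neighbour of the other colour. In a 2-regular graph each vertex then has at most one neighbour of
its own colour, so each colour class induces a matching, which is a cluster graph; hence both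
colour classes are hitting sets, and the cheaper of the two costs at most half of c(V).
-/

open Finset

namespace SimpleGraph

variable {G : SimpleGraph V}

lemma isClusterGraph_of_adj_unique
    (h : ∀ a b b' : V, G.Adj a b → G.Adj a b' → b = b') : IsClusterGraph G := by
  rintro u v huv ⟨w⟩
  induction w with
  | nil => exact absurd rfl huv
  | @cons a b d hab _ ih =>
    rcases eq_or_ne b d with rfl | hbd
    · exact hab
    · exact absurd (h b a d hab.symm (ih hbd)) huv

lemma eq_or_eq_or_eq_of_adj_of_degree_le_two [G.LocallyFinite] {v a b d : V}
    (hv : G.degree v ≤ 2) (ha : G.Adj v a) (hb : G.Adj v b) (hd : G.Adj v d) :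
    a = b ∨ a = d ∨ b = d := by
  by_contra! hne
  have : 2 < #(G.neighborFinset v) := Finset.two_lt_card.mpr
    ⟨a, by simpa, b, by simpa, d, by simpa, hne.1, hne.2.1, hne.2.2⟩
  rw [card_neighborFinset_eq_degree] at this
  omega

def cutPairs (G : SimpleGraph V) (χ : V → Bool) : Set (V × V) :=
  {p | G.Adj p.1 p.2 ∧ χ p.1 ≠ χ p.2}

lemma cutPairs_ssubset_update_not [DecidableEq V] {χ : V → Bool} {v u : V}
    (hmono : ∀ w, G.Adj v w → χ w = χ v) (hvu : G.Adj v u) :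
    cutPairs G χ ⊂ cutPairs G (Function.update χ v (!χ v)) := by
  refine Set.ssubset_iff_subset_ne.mpr ⟨?_, fun heq => ?_⟩
  · rintro ⟨x, y⟩ ⟨hxy, hχ⟩
    have hx : x ≠ v := by rintro rfl; exact hχ (hmono y hxy).symm
    have hy : y ≠ v := by rintro rfl; exact hχ (hmono x hxy.symm)
    exact ⟨hxy, by simpa [Function.update_of_ne hx, Function.update_of_ne hy] using hχ⟩
  · have hcut : (v, u) ∈ cutPairs G (Function.update χ v (!χ v)) := by
      refine ⟨hvu, ?_⟩
      simp [Function.update_of_ne hvu.ne.symm, hmono u hvu]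
    rw [← heq] at hcut
    exact hcut.2 (hmono u hvu).symm

lemma exists_coloring_forall_exists_adj_ne [Finite V] (hadj : ∀ v, ∃ u, G.Adj v u) :
    ∃ χ : V → Bool, ∀ v, ∃ u, G.Adj v u ∧ χ u ≠ χ v := by
  classical
  obtain ⟨χ, hmax⟩ := Finite.exists_max fun χ : V → Bool => (cutPairs G χ).ncard
  refine ⟨χ, fun v => ?_⟩
  by_contra! hmono
  obtain ⟨u, hvu⟩ := hadj v
  exact (hmax _).not_gt (Set.ncard_lt_ncard (cutPairs_ssubset_update_not hmono hvu))

lemma isHittingSet_colorClass [G.LocallyFinite] (hdeg : ∀ v, G.degree v ≤ 2) {χ : V → Bool}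
    (hχ : ∀ v, ∃ u, G.Adj v u ∧ χ u ≠ χ v) (b : Bool) :
    IsHittingSet G {v | χ v = b} := by
  apply isClusterGraph_of_adj_unique
  rintro ⟨a, ha⟩ ⟨d, hd⟩ ⟨d', hd'⟩ (had : G.Adj a d) (had' : G.Adj a d')
  obtain ⟨u, hau, hχu⟩ := hχ a
  replace ha : χ a = !b := Bool.eq_not_of_ne ha
  have hud : u ≠ d := by rintro rfl; exact hχu (by rw [Bool.eq_not_of_ne hd, ha])
  have hud' : u ≠ d' := by rintro rfl; exact hχu (by rw [Bool.eq_not_of_ne hd', ha])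
  rcases eq_or_eq_or_eq_of_adj_of_degree_le_two (hdeg a) hau had had' with h | h | h
  · exact absurd h hud
  · exact absurd h hud'
  · exact Subtype.ext h

end SimpleGraph

lemma exists_sum_filter_le_half {ι K : Type*} [Fintype ι] [Field K] [LinearOrder K]
    [IsStrictOrderedRing K] (χ : ι → Bool) (c : ι → K) :
    ∃ b, ∑ i with χ i = b, c i ≤ (∑ i, c i) / 2 := by
  have hsplit : ∑ i with χ i = true, c i + ∑ i with χ i = false, c i = ∑ i, c i := by
    rw [← Finset.sum_fiberwise univ χ c, Fintype.sum_bool]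
  rcases le_total (∑ i with χ i = true, c i) (∑ i with χ i = false, c i) with h | h
  · exact ⟨true, by linarith⟩
  · exact ⟨false, by linarith⟩

theorem stmt_12_general [Fintype V] [DecidableEq V] (G : SimpleGraph V) [DecidableRel G.Adj]
    (hreg : ∀ v : V, G.degree v = 2)
    (c : V → ℚ) :
    ∃ X : Finset V, IsHittingSet G ↑X ∧
      ∑ v ∈ X, c v ≤ (3 / 2) * ∑ v : V, c v * (1 / 3) := by
  have hadj : ∀ v, ∃ u, G.Adj v u := fun v =>
    G.degree_pos_iff_exists_adj v |>.mp (by rw [hreg]; norm_num)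
  obtain ⟨χ, hχ⟩ := G.exists_coloring_forall_exists_adj_ne hadj
  obtain ⟨b, hb⟩ := exists_sum_filter_le_half χ c
  refine ⟨univ.filter (χ · = b), by simpa using G.isHittingSet_colorClass (hreg · |>.le) hχ b, ?_⟩
  calc ∑ v with χ v = b, c v ≤ (∑ v, c v) / 2 := hb
    _ = (3 / 2) * ∑ v : V, c v * (1 / 3) := by rw [← Finset.sum_mul]; ring

/-- On a cycle (connected 2-regular graph) on n ≥ 4 vertices, the all-1/3 fractional
solution can be rounded: some hitting set X has c(X) ≤ (3/2)·Σ_v c(v)·(1/3). -/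
theorem stmt_12 [Fintype V] [DecidableEq V] (G : SimpleGraph V) [DecidableRel G.Adj]
    (n : ℕ) (hn : 4 ≤ n) (hcard : Fintype.card V = n)
    (hconn : G.Connected) (hreg : ∀ v : V, G.degree v = 2)
    (c : V → ℚ) (hc : ∀ v, 0 ≤ c v) :
    ∃ X : Finset V, IsHittingSet G ↑X ∧
      ∑ v ∈ X, c v ≤ (3 / 2) * ∑ v : V, c v * (1 / 3) :=
  stmt_12_general G hreg c
end

section
/- Let G be a graph with girth at least 5 and n vertices. Define x_v = 2/5 for all vertices v, x_{vw} = 0 if vw ∈ E(G), and x_{vw} = 1/5 if vw ∉ E(G). Then for every induced P_3 with vertex set {u,v,w} (middle vertex v) and every vertex z ∉ {u,v,w}: (1) x_u + x_v + x_w ≥ 1 + x_{uv} + x_{vw}; (2) x_{uz} + x_{vz} + x_{wz} ≥ x_z; (3) x_u + x_v + x_w + x_z ≥ 1 + x_{uz} + x_{vz} + x_{wz}; and (4) 1 ≥ x_v ≥ x_{vu} ≥ 0 for all distinct u,v. -/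
variable {V : Type*}

/-- Edge variables of the Sherali–Adams feasible point: x_{vw} = 0 if vw ∈ E, 1/5 otherwise. -/
def xE (G : SimpleGraph V) [DecidableRel G.Adj] (a b : V) : ℚ :=
  if G.Adj a b then 0 else 1 / 5

/-- Vertex variables: x_v = 2/5 for all v. -/
def xV : V → ℚ := fun _ => 2 / 5

namespace SimpleGraph

variable {G : SimpleGraph V} {a b c d : V}

lemma girth_le_egirth : (G.girth : ℕ∞) ≤ G.egirth :=
  ENat.natCast_toNat_le_self _

lemma not_adj_of_adj_of_adj_of_three_lt_egirth (hG : 3 < G.egirth)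
    (hab : G.Adj a b) (hbc : G.Adj b c) : ¬ G.Adj a c := fun hac => by
  have hcycle : (Walk.cons hab (.cons hbc (.cons hac.symm .nil))).IsCycle := by
    simp [Walk.isCycle_def, hab.ne, hbc.ne, hac.ne, hab.ne', hac.ne']
  exact (egirth_le_length hcycle).not_gt hG

lemma eq_of_adj_of_adj_of_four_lt_egirth (hG : 4 < G.egirth) (hac : a ≠ c)
    (hab : G.Adj a b) (hbc : G.Adj b c) (hcd : G.Adj c d) (hda : G.Adj d a) : b = d := by
  by_contra hbd
  have hcycle : (Walk.cons hab (.cons hbc (.cons hcd (.cons hda .nil)))).IsCycle := by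
    simp [Walk.isCycle_def, hab.ne, hbc.ne, hcd.ne, hda.ne, hac, hbd,
      hab.ne', hda.ne', Ne.symm hac]
  exact (egirth_le_length hcycle).not_gt hG

end SimpleGraph

section SheraliAdamsPoint

variable {G : SimpleGraph V} [DecidableRel G.Adj] {a b c z : V}

lemma xE_of_adj (h : G.Adj a b) : xE G a b = 0 := if_pos h

lemma xE_nonneg : 0 ≤ xE G a b := by
  unfold xE; split_ifs <;> norm_num

lemma xE_le : xE G a b ≤ 1 / 5 := by
  unfold xE; split_ifs <;> norm_num

lemma two_fifths_le_xE_add_xE_add_xE (hab : ¬ (G.Adj a z ∧ G.Adj b z))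
    (hbc : ¬ (G.Adj b z ∧ G.Adj c z)) (hac : ¬ (G.Adj a z ∧ G.Adj c z)) :
    2 / 5 ≤ xE G a z + xE G b z + xE G c z := by
  unfold xE; split_ifs <;> first | tauto | norm_num

end SheraliAdamsPoint

/-- In a graph of girth at least 5, the point (x_v = 2/5, x_{vw} as above) satisfies all
the round-1 Sherali–Adams inequalities for the P₃-covering LP. -/
theorem stmt_15 (G : SimpleGraph V) [DecidableRel G.Adj]
    (hgirth : (5 : ℕ∞) ≤ G.girth) :
    (∀ u v w z : V, IsInducedP3 G u v w → z ≠ u → z ≠ v → z ≠ w →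
      (1 + xE G u v + xE G v w ≤ xV u + xV v + xV w) ∧
      (xV z ≤ xE G u z + xE G v z + xE G w z) ∧
      (1 + xE G u z + xE G v z + xE G w z ≤ xV u + xV v + xV w + xV z)) ∧
    (∀ u v : V, u ≠ v → xE G v u ≤ xV v ∧ (xV v : ℚ) ≤ 1 ∧ 0 ≤ xE G v u) := by
  have h5 : (5 : ℕ∞) ≤ G.egirth := hgirth.trans G.girth_le_egirth
  have h3 : 3 < G.egirth := lt_of_lt_of_le (by norm_num) h5
  have h4 : 4 < G.egirth := lt_of_lt_of_le (by norm_num) h5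
  refine ⟨fun u v w z ⟨huw, huv, hvw, _⟩ _ hzv _ => ⟨?_, ?_, ?_⟩,
    fun u v _ => ⟨xE_le.trans (by norm_num [xV]), by norm_num [xV], xE_nonneg⟩⟩
  · rw [xE_of_adj huv, xE_of_adj hvw]
    norm_num [xV]
  · refine two_fifths_le_xE_add_xE_add_xE ?_ ?_ ?_
    · exact fun ⟨huz, hvz⟩ => G.not_adj_of_adj_of_adj_of_three_lt_egirth h3 huv hvz huz
    · exact fun ⟨hvz, hwz⟩ => G.not_adj_of_adj_of_adj_of_three_lt_egirth h3 hvw hwz hvz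
    · exact fun ⟨huz, hwz⟩ =>
        hzv (G.eq_of_adj_of_adj_of_four_lt_egirth h4 huw huv hvw hwz huz.symm).symm
  · simp only [xV]
    linarith [xE_le (G := G) (a := u) (b := z), xE_le (G := G) (a := v) (b := z),
      xE_le (G := G) (a := w) (b := z)]
end

section
/- Let G be a graph, K a clique of size k in G, and suppose for each edge of K there is a distinguisher (a vertex adjacent to exactly one endpoint). Then there exists an induced subgraph H of G containing K with |V(H)| ≤ 2k − 1 and a cost function c_H : V(H) → ℤ≥0 with c_H(V(H)) = 2k − 1 such that every hitting set X of H satisfies c_H(X) ≥ k − 1. -/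
variable {V : Type*}

/-!
Refine `K` by distinguishers: while a part `S` has two vertices, a distinguisher `z ∉ K` of
them splits `S` into its neighbours and its non-neighbours, and we recurse on both halves.
The `|K| - 1` splitters used form a multiset `M` such that every `T ⊆ K` is split by at least
`|T| - 1` elements of `M`, counted with multiplicity. Take `H = K ∪ M` with cost the
multiplicity in `K + M`, of total `2k - 1`. After deleting a hitting set `X`, the survivors
`T = K \ X` form a clique in a cluster graph, so a splitter of `T` outside `X` would give an
induced `P₃`; hence all of them lie in `X`, and `c(X) ≥ |K ∩ X| + |T| - 1 = k - 1`.
-/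

theorem Multiset.countP_mono_left {α : Type*} {p q : α → Prop} [DecidablePred p]
    [DecidablePred q] {s : Multiset α} (h : ∀ a ∈ s, p a → q a) :
    s.countP p ≤ s.countP q := by
  induction s using Multiset.induction_on with
  | empty => simp
  | cons a s ih =>
    have hs := ih fun b hb => h b (Multiset.mem_cons_of_mem hb)
    have ha := h a (Multiset.mem_cons_self a s)
    simp only [Multiset.countP_cons]
    split_ifs <;> grind

theorem Multiset.sum_count_eq_countP_mem {α : Type*} [DecidableEq α] (s : Multiset α)
    (X : Finset α) : ∑ x ∈ X, s.count x = s.countP (· ∈ X) := by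
  rw [Multiset.countP_eq_card_filter, ← Multiset.sum_count_eq_card (s := X)
    (fun a ha => (Multiset.mem_filter.1 ha).2)]
  exact Finset.sum_congr rfl fun x hx => (Multiset.count_filter_of_pos hx).symm

theorem IsClusterGraph.adj_of_adj_of_adj {G : SimpleGraph V} {s : Set V}
    (h : IsClusterGraph (G.induce s)) {u v w : V} (hu : u ∈ s) (hv : v ∈ s) (hw : w ∈ s)
    (huv : G.Adj u v) (hvw : G.Adj v w) (huw : u ≠ w) : G.Adj u w :=
  h ⟨u, hu⟩ ⟨w, hw⟩ (by simpa using huw)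
    ((show (G.induce s).Adj ⟨u, hu⟩ ⟨v, hv⟩ from huv).reachable.trans
      (show (G.induce s).Adj ⟨v, hv⟩ ⟨w, hw⟩ from hvw).reachable)

namespace SimpleGraph

theorem IsClique.notMem_of_not_adj_iff {G : SimpleGraph V} {s : Set V} (hs : G.IsClique s)
    {a b z : V} (ha : a ∈ s) (hb : b ∈ s) (hza : z ≠ a) (hzb : z ≠ b)
    (hz : ¬(G.Adj z a ↔ G.Adj z b)) : z ∉ s :=
  fun hzs => hz (iff_of_true (hs hzs ha hza) (hs hzs hb hzb))

section Splits

variable (G : SimpleGraph V)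

def Splits (z : V) (T : Finset V) : Prop :=
  ∃ a ∈ T, ∃ b ∈ T, G.Adj z a ∧ ¬ G.Adj z b

open scoped Classical in
def IsSplittingMultiset (S : Finset V) (M : Multiset V) : Prop :=
  ∀ T ⊆ S, T.card ≤ M.countP (G.Splits · T) + 1

variable {G}

theorem Splits.mono {z : V} {T T' : Finset V} (h : G.Splits z T) (hT : T ⊆ T') :
    G.Splits z T' := by
  obtain ⟨a, ha, b, hb, hab⟩ := h
  exact ⟨a, hT ha, b, hT hb, hab⟩

theorem not_splits_iff {z : V} {T : Finset V} :
    ¬ G.Splits z T ↔ (∀ a ∈ T, G.Adj z a) ∨ ∀ a ∈ T, ¬ G.Adj z a := by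
  unfold Splits
  grind

theorem _root_.IsClusterGraph.not_splits {s : Set V} (h : IsClusterGraph (G.induce s))
    {T : Finset V} (hT : G.IsClique (T : Set V)) (hTs : ↑T ⊆ s) {z : V} (hz : z ∈ s)
    (hzT : z ∉ T) : ¬ G.Splits z T := by
  rintro ⟨a, ha, b, hb, hza, hzb⟩
  have hab : a ≠ b := by rintro rfl; exact hzb hza
  exact hzb (h.adj_of_adj_of_adj hz (hTs ha) (hTs hb) hza (hT ha hb hab)
    (by rintro rfl; exact hzT hb))

open scoped Classical in
theorem IsSplittingMultiset.cons_add {S : Finset V} {z : V} {M₁ M₂ : Multiset V}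
    (h₁ : G.IsSplittingMultiset (S.filter (G.Adj z)) M₁)
    (h₂ : G.IsSplittingMultiset (S.filter (¬ G.Adj z ·)) M₂) :
    G.IsSplittingMultiset S (z ::ₘ (M₁ + M₂)) := by
  intro T hT
  by_cases hz : G.Splits z T
  · have hT₁ := h₁ _ (Finset.filter_subset_filter (G.Adj z) hT)
    have hT₂ := h₂ _ (Finset.filter_subset_filter (¬ G.Adj z ·) hT)
    have hmono : ∀ (M : Multiset V) (T' : Finset V), T' ⊆ T →
        M.countP (G.Splits · T') ≤ M.countP (G.Splits · T) := fun M T' hT' =>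
      Multiset.countP_mono_left fun _ _ h => h.mono hT'
    have hcard := Finset.card_filter_add_card_filter_not (s := T) (G.Adj z)
    rw [Multiset.countP_cons_of_pos (p := fun x => G.Splits x T) _ hz, Multiset.countP_add]
    have := hmono M₁ _ (Finset.filter_subset (G.Adj z) T)
    have := hmono M₂ _ (Finset.filter_subset (¬ G.Adj z ·) T)
    omega
  · have hle₁ : M₁.countP (G.Splits · T) ≤ (z ::ₘ (M₁ + M₂)).countP (G.Splits · T) :=
      Multiset.countP_le_of_le _ ((Multiset.le_add_right _ _).trans (Multiset.le_cons_self _ z))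
    have hle₂ : M₂.countP (G.Splits · T) ≤ (z ::ₘ (M₁ + M₂)).countP (G.Splits · T) :=
      Multiset.countP_le_of_le _ ((Multiset.le_add_left _ _).trans (Multiset.le_cons_self _ z))
    rcases not_splits_iff.mp hz with hadj | hnadj
    · have := h₁ T fun a ha => Finset.mem_filter.mpr ⟨hT ha, hadj a ha⟩
      omega
    · have := h₂ T fun a ha => Finset.mem_filter.mpr ⟨hT ha, hnadj a ha⟩
      omega

open scoped Classical in
theorem IsSplittingMultiset.card_le_countP {S T : Finset V} {M : Multiset V}
    (h : G.IsSplittingMultiset S M) (hT : T ⊆ S) {p : V → Prop} [DecidablePred p]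
    (hp : ∀ z ∈ M, G.Splits z T → p z) : T.card ≤ M.countP p + 1 :=
  (h T hT).trans (Nat.add_le_add_right (Multiset.countP_mono_left hp) 1)

theorem exists_isSplittingMultiset (Z : Set V) (S : Finset V)
    (hZ : ∀ a ∈ S, ∀ b ∈ S, a ≠ b → ∃ z ∈ Z, ¬(G.Adj z a ↔ G.Adj z b)) :
    ∃ M : Multiset V, (∀ z ∈ M, z ∈ Z) ∧ Multiset.card M = S.card - 1 ∧
      G.IsSplittingMultiset S M := by
  classical
  induction S using Finset.strongInduction with
  | H S ih =>
  by_cases hS : S.card ≤ 1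
  · refine ⟨0, by simp, by simp only [Multiset.card_zero]; omega, fun T hT => ?_⟩
    have := Finset.card_le_card hT
    omega
  obtain ⟨a, ha, b, hb, hab⟩ := Finset.one_lt_card.mp (not_le.mp hS)
  obtain ⟨z, hzZ, hz⟩ := hZ a ha b hb hab
  have hadj : ∃ x ∈ S, G.Adj z x := by
    by_cases hza : G.Adj z a
    exacts [⟨a, ha, hza⟩, ⟨b, hb, by tauto⟩]
  have hnadj : ∃ x ∈ S, ¬ G.Adj z x := by
    by_cases hza : G.Adj z a
    exacts [⟨b, hb, by tauto⟩, ⟨a, ha, hza⟩]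
  have hZ_filter (p : V → Prop) [DecidablePred p] :
      ∀ a ∈ S.filter p, ∀ b ∈ S.filter p, a ≠ b → ∃ z ∈ Z, ¬(G.Adj z a ↔ G.Adj z b) :=
    fun a ha b hb => hZ a (Finset.mem_of_mem_filter a ha) b (Finset.mem_of_mem_filter b hb)
  obtain ⟨M₁, hM₁Z, hM₁card, hM₁⟩ :=
    ih _ (Finset.filter_ssubset.mpr hnadj) (hZ_filter (G.Adj z))
  obtain ⟨M₂, hM₂Z, hM₂card, hM₂⟩ :=
    ih _ (Finset.filter_ssubset.mpr (by simpa using hadj)) (hZ_filter (¬ G.Adj z ·))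
  refine ⟨z ::ₘ (M₁ + M₂), ?_, ?_, hM₁.cons_add hM₂⟩
  · simp only [Multiset.mem_cons, Multiset.mem_add]
    rintro x (rfl | hx | hx)
    exacts [hzZ, hM₁Z x hx, hM₂Z x hx]
  · have hcard := Finset.card_filter_add_card_filter_not (s := S) (G.Adj z)
    have := Finset.card_pos.mpr (Finset.filter_nonempty_iff.mpr hadj)
    have := Finset.card_pos.mpr (Finset.filter_nonempty_iff.mpr hnadj)
    simp only [Multiset.card_cons, Multiset.card_add]
    omega

end Splits

end SimpleGraph

theorem stmt_16_general [DecidableEq V] (G : SimpleGraph V) (k : ℕ) (K : Finset V)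
    (hK : G.IsClique (↑K : Set V)) (hcard : K.card = k)
    (hdisting : ∀ a ∈ K, ∀ b ∈ K, a ≠ b → ∃ z : V, z ≠ a ∧ z ≠ b ∧
      ((G.Adj z a ∧ ¬ G.Adj z b) ∨ (¬ G.Adj z a ∧ G.Adj z b))) :
    ∃ (W : Finset V) (cH : V → ℕ), K ⊆ W ∧ W.card ≤ 2 * k - 1 ∧
      (∑ w ∈ W, cH w = 2 * k - 1) ∧
      ∀ X : Finset V, X ⊆ W →
        IsClusterGraph (G.induce ((↑W : Set V) \ (↑X : Set V))) →
        k - 1 ≤ ∑ w ∈ X, cH w := by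
  have hsep : ∀ a ∈ K, ∀ b ∈ K, a ≠ b → ∃ z ∈ (↑K : Set V)ᶜ, ¬(G.Adj z a ↔ G.Adj z b) := by
    intro a ha b hb hab
    obtain ⟨z, hza, hzb, hz⟩ := hdisting a ha b hb hab
    have hz' : ¬(G.Adj z a ↔ G.Adj z b) := by tauto
    exact ⟨z, hK.notMem_of_not_adj_iff ha hb hza hzb hz', hz'⟩
  obtain ⟨M, hMK, hMcard, hM⟩ := G.exists_isSplittingMultiset _ K hsep
  have hKM : ∀ v ∈ K.val + M, v ∈ K ∪ M.toFinset := by simp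
  refine ⟨K ∪ M.toFinset, fun v => (K.val + M).count v, Finset.subset_union_left, ?_, ?_, ?_⟩
  · have := Finset.card_union_le K M.toFinset
    have := Multiset.toFinset_card_le M
    omega
  · rw [Multiset.sum_count_eq_card hKM, Multiset.card_add, Finset.card_val]
    omega
  intro X _ hX
  have hsplit : ∀ z ∈ M, G.Splits z (K \ X) → z ∈ X := by
    intro z hzM hz
    by_contra hzX
    have hsurvivors : ↑(K \ X) ⊆ (↑(K ∪ M.toFinset) : Set V) \ ↑X := by
      rw [Finset.coe_sdiff]
      exact Set.sdiff_subset_sdiff_left (Finset.coe_subset.mpr Finset.subset_union_left)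
    exact hX.not_splits (hK.subset (by simp)) hsurvivors (by simpa [hzM] using hzX)
      (fun h => hMK z hzM (Finset.mem_sdiff.mp h).1) hz
  have hkilled : (K ∩ X).card = K.val.countP (· ∈ X) := by
    rw [← Finset.filter_mem_eq_inter, Multiset.countP_eq_card_filter]
    rfl
  have := hM.card_le_countP (p := (· ∈ X)) Finset.sdiff_subset hsplit
  have := Finset.card_inter_add_card_sdiff K X
  rw [Multiset.sum_count_eq_countP_mem, Multiset.countP_add]
  omega

/-- If K is a k-clique of G each of whose edges has a distinguisher, then there is an
induced subgraph H ⊇ K on at most 2k − 1 vertices and a cost function of total cost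
2k − 1 such that every hitting set of H has cost at least k − 1. -/
theorem stmt_16 [Fintype V] [DecidableEq V] (G : SimpleGraph V) (k : ℕ) (K : Finset V)
    (hK : G.IsClique (↑K : Set V)) (hcard : K.card = k)
    (hdisting : ∀ a ∈ K, ∀ b ∈ K, a ≠ b → ∃ z : V, z ≠ a ∧ z ≠ b ∧
      ((G.Adj z a ∧ ¬ G.Adj z b) ∨ (¬ G.Adj z a ∧ G.Adj z b))) :
    ∃ (W : Finset V) (cH : V → ℕ), K ⊆ W ∧ W.card ≤ 2 * k - 1 ∧
      (∑ w ∈ W, cH w = 2 * k - 1) ∧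
      ∀ X : Finset V, X ⊆ W →
        IsClusterGraph (G.induce ((↑W : Set V) \ (↑X : Set V))) →
        k - 1 ≤ ∑ w ∈ X, cH w :=
  stmt_16_general G k K hK hcard hdisting
end
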